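/- Let A be definite. Each column (A*)_{·k} of the Kleene star is a max extremal of the max-algebraic span of the columns of A*: if (A*)_{·k} = u ⊕ w with u, w in the span, then (A*)_{·k} = u or (A*)_{·k} = w. -/

import Mathlib

open Finset

/-- Max-times matrix product: `(A ⊗ B) i j = max_k (A i k * B k j)`. -/
noncomputable def mProd {n : ℕ} (A B : Matrix (Fin n) (Fin n) NNReal) :
    Matrix (Fin n) (Fin n) NNReal :=
  fun i j => univ.sup fun k => A i k * B k j

/-- Max-algebraic matrix powers, `mPow A 0 = I`. -/
noncomputable def mPow {n : ℕ} (A : Matrix (Fin n) (Fin n) NNReal) :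
    ℕ → Matrix (Fin n) (Fin n) NNReal
  | 0 => fun i j => if i = j then 1 else 0
  | k + 1 => mProd (mPow A k) A

/-- Kleene star `A* = I ⊕ A ⊕ ... ⊕ A^{n-1}` in max algebra. -/
noncomputable def klStar {n : ℕ} (A : Matrix (Fin n) (Fin n) NNReal) :
    Matrix (Fin n) (Fin n) NNReal :=
  fun i j => (Finset.range n).sup fun k => mPow A k i j

/-- Partial "sums" `I ⊕ A ⊕ ... ⊕ A^m` of the Kleene star series. -/
noncomputable def kPartial {n : ℕ} (A : Matrix (Fin n) (Fin n) NNReal) (m : ℕ) :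
    Matrix (Fin n) (Fin n) NNReal :=
  fun i j => (Finset.range (m + 1)).sup fun k => mPow A k i j

/-- The weight of the cycle given by the list `l` (with wrap-around edge). -/
def cycleWeight {n : ℕ} (A : Matrix (Fin n) (Fin n) NNReal) (l : List (Fin n)) : NNReal :=
  ((l.zip (l.rotate 1)).map fun p => A p.1 p.2).prod

/-- The geometric mean of a cycle: `w(σ,A)^{1/k}`. -/
noncomputable def cycleMean {n : ℕ} (A : Matrix (Fin n) (Fin n) NNReal) (l : List (Fin n)) :
    NNReal :=
  (cycleWeight A l) ^ ((l.length : ℝ)⁻¹)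

/-- The maximum cycle geometric mean `λ(A)`. -/
noncomputable def maxCycleMean {n : ℕ} (A : Matrix (Fin n) (Fin n) NNReal) : NNReal :=
  sSup {x | ∃ l : List (Fin n), l ≠ [] ∧ x = cycleMean A l}

/-- `(i,j)` is a critical edge: it lies on a cycle attaining `λ(A)`. -/
def criticalEdge {n : ℕ} (A : Matrix (Fin n) (Fin n) NNReal) (i j : Fin n) : Prop :=
  ∃ l : List (Fin n), l ≠ [] ∧ cycleMean A l = maxCycleMean A ∧ (i, j) ∈ l.zip (l.rotate 1)

/-- Max-algebraic matrix-vector product. -/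
noncomputable def mVec {n : ℕ} (A : Matrix (Fin n) (Fin n) NNReal) (x : Fin n → NNReal) :
    Fin n → NNReal :=
  fun i => univ.sup fun j => A i j * x j

/-
Since `λ(A) = 1`, no cycle has weight exceeding `1`. Deleting a cycle from a walk therefore never
decreases its weight, so every walk is dominated by a walk without repeated vertices, of length
`< n`; hence `A^m ≤ A*` for all `m`. This gives `A*_{kk} = 1` and `A*_{ik} A*_{kt} ≤ A*_{it}`,
so every `v` in the span of the columns of `A*` satisfies `A*_{ik} v_k ≤ v_i`. If
`A*_{·k} = u ⊕ w`, one of `u_k`, `w_k`, say `u_k`, equals `A*_{kk} = 1`, and then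
`A*_{ik} ≤ u_i ≤ A*_{ik}` for every `i`.
-/

lemma List.exists_eq_append_cons_append_cons_of_not_nodup {α : Type*} {l : List α}
    (h : ¬ l.Nodup) : ∃ l₁ v l₂ l₃, l = l₁ ++ v :: (l₂ ++ v :: l₃) := by
  induction l with
  | nil => exact absurd List.nodup_nil h
  | cons a t ih =>
    rw [List.nodup_cons, not_and_or, not_not] at h
    rcases h with ha | ht
    · obtain ⟨l₂, l₃, rfl⟩ := List.append_of_mem ha
      exact ⟨[], a, l₂, l₃, rfl⟩
    · obtain ⟨l₁, v, l₂, l₃, rfl⟩ := ih ht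
      exact ⟨a :: l₁, v, l₂, l₃, rfl⟩

section Walks

variable {ι R : Type*} [Monoid R] (A : Matrix ι ι R)

def walkWeight : List ι → R
  | [] => 1
  | [_] => 1
  | a :: b :: l => A a b * walkWeight (b :: l)

@[simp] lemma walkWeight_singleton (a : ι) : walkWeight A [a] = 1 := rfl

@[simp] lemma walkWeight_cons_cons (a b : ι) (l : List ι) :
    walkWeight A (a :: b :: l) = A a b * walkWeight A (b :: l) := rfl

lemma walkWeight_append_cons (l₁ : List ι) (v : ι) (l₂ : List ι) :
    walkWeight A (l₁ ++ v :: l₂) = walkWeight A (l₁ ++ [v]) * walkWeight A (v :: l₂) := by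
  induction l₁ with
  | nil => simp
  | cons a l₁ ih =>
    cases l₁ with
    | nil => simp
    | cons b l₁ =>
      simp only [List.cons_append, walkWeight_cons_cons] at ih ⊢
      rw [ih, mul_assoc]

lemma walkWeight_concat {l : List ι} {t : ι} (ht : l.getLast? = some t) (j : ι) :
    walkWeight A (l ++ [j]) = walkWeight A l * A t j := by
  obtain ⟨l₀, rfl⟩ := List.getLast?_eq_some_iff.mp ht
  rw [List.append_assoc, List.singleton_append, walkWeight_append_cons]
  simp

end Walks

section KleeneStar

variable {n : ℕ} (A : Matrix (Fin n) (Fin n) NNReal)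

lemma cycleWeight_cons (v : Fin n) (l : List (Fin n)) :
    cycleWeight A (v :: l) = walkWeight A (v :: (l ++ [v])) := by
  have zip_eq : ∀ (l : List (Fin n)) (v w : Fin n),
      (((v :: l).zip (l ++ [w])).map fun p => A p.1 p.2).prod = walkWeight A (v :: (l ++ [w])) := by
    intro l
    induction l with
    | nil => simp
    | cons a l ih => intro v w; simp [ih a w]
  rw [cycleWeight, List.rotate_cons_succ, List.rotate_zero, zip_eq]

lemma cycleWeight_le_one_of_maxCycleMean_eq_one (hA : maxCycleMean A = 1) (c : List (Fin n))
    (hc : c ≠ []) : cycleWeight A c ≤ 1 := by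
  have hbdd : BddAbove {x | ∃ l : List (Fin n), l ≠ [] ∧ x = cycleMean A l} := by
    by_contra hb
    rw [maxCycleMean, csSup_of_not_bddAbove hb, csSup_empty] at hA
    exact zero_ne_one hA
  have hmean : cycleMean A c ≤ 1 := hA ▸ le_csSup hbdd ⟨c, hc, rfl⟩
  have hlen : (0 : ℝ) < c.length := by simpa [List.length_pos_iff] using hc
  rwa [cycleMean, NNReal.rpow_inv_le_iff hlen, NNReal.one_rpow] at hmean

lemma mPow_mul_le (a b : ℕ) (i p j : Fin n) :
    mPow A a i p * mPow A b p j ≤ mPow A (a + b) i j := by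
  induction b generalizing j with
  | zero => by_cases h : p = j <;> simp [mPow, h]
  | succ b ih =>
    simp only [mPow, mProd, NNReal.mul_finset_sup]
    exact Finset.sup_mono_fun fun t _ => by
      rw [← mul_assoc]
      exact mul_le_mul_left (ih t) _

lemma walkWeight_le_mPow (i : Fin n) (l : List (Fin n)) {j : Fin n}
    (hj : (i :: l).getLast? = some j) : walkWeight A (i :: l) ≤ mPow A l.length i j := by
  induction l using List.reverseRecOn generalizing j with
  | nil =>
    obtain rfl : i = j := by simpa using hj
    simp [mPow]
  | append_singleton l x ih =>
    rw [← List.cons_append, List.getLast?_concat, Option.some_inj] at hj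
    subst hj
    have ht : (i :: l).getLast? = some (l.getLast?.getD i) := List.getLast?_cons
    rw [← List.cons_append, walkWeight_concat A ht, List.length_append, List.length_singleton]
    calc walkWeight A (i :: l) * A _ x ≤ mPow A l.length i _ * A _ x :=
          mul_le_mul_left (ih ht) _
      _ ≤ mPow A (l.length + 1) i x :=
          le_sup (f := fun t => mPow A l.length i t * A t x) (mem_univ _)

lemma exists_walk_mPow_le (m : ℕ) (i j : Fin n) :
    ∃ l : List (Fin n), (i :: l).getLast? = some j ∧
      mPow A m i j ≤ walkWeight A (i :: l) := by
  induction m generalizing j with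
  | zero =>
    by_cases h : i = j
    · exact ⟨[], by simp [h], by simp [mPow, h]⟩
    · exact ⟨[j], by simp, by simp [mPow, h]⟩
  | succ m ih =>
    obtain ⟨t, -, ht⟩ :=
      exists_mem_eq_sup univ ⟨i, mem_univ i⟩ fun t => mPow A m i t * A t j
    obtain ⟨l, hl, hle⟩ := ih t
    refine ⟨l ++ [j], by rw [← List.cons_append, List.getLast?_concat], ?_⟩
    rw [← List.cons_append, walkWeight_concat A hl]
    exact (le_of_eq ht).trans (mul_le_mul_left hle _)

lemma walkWeight_le_of_cycleWeight_le_one {v : Fin n} {l₂ : List (Fin n)}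
    (h : cycleWeight A (v :: l₂) ≤ 1) (l₁ l₃ : List (Fin n)) :
    walkWeight A (l₁ ++ v :: (l₂ ++ v :: l₃)) ≤ walkWeight A (l₁ ++ v :: l₃) := by
  rw [walkWeight_append_cons, walkWeight_append_cons A l₁ v l₃, ← List.cons_append,
    walkWeight_append_cons A (v :: l₂), List.cons_append, ← cycleWeight_cons]
  exact mul_le_mul_right (mul_le_of_le_one_left zero_le h) _

lemma walkWeight_le_one_of_getLast?_eq
    (hA : ∀ c : List (Fin n), c ≠ [] → cycleWeight A c ≤ 1)
    (i : Fin n) (l : List (Fin n)) (hi : (i :: l).getLast? = some i) :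
    walkWeight A (i :: l) ≤ 1 := by
  induction l using List.reverseRecOn with
  | nil => simp
  | append_singleton l x _ =>
    rw [← List.cons_append, List.getLast?_concat, Option.some_inj] at hi
    subst hi
    rw [← cycleWeight_cons]
    exact hA _ (List.cons_ne_nil _ _)

lemma walkWeight_le_klStar (hA : ∀ c : List (Fin n), c ≠ [] → cycleWeight A c ≤ 1)
    (L : List (Fin n)) {i j : Fin n} (hi : L.head? = some i) (hj : L.getLast? = some j) :
    walkWeight A L ≤ klStar A i j := by
  by_cases hL : L.Nodup
  · obtain ⟨l, rfl⟩ := List.head?_eq_some_iff.mp hi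
    have hlen : l.length < n := by simpa using hL.length_le_card
    exact (walkWeight_le_mPow A i l hj).trans
      (le_sup (f := fun m => mPow A m i j) (mem_range.mpr hlen))
  · obtain ⟨l₁, v, l₂, l₃, rfl⟩ := List.exists_eq_append_cons_append_cons_of_not_nodup hL
    refine (walkWeight_le_of_cycleWeight_le_one A (hA _ (List.cons_ne_nil _ _)) l₁ l₃).trans
      (walkWeight_le_klStar hA (l₁ ++ v :: l₃) ?_ ?_)
    · cases l₁ <;> simpa using hi
    · rw [List.getLast?_append_cons] at hj ⊢
      rwa [← List.cons_append, List.getLast?_append_cons] at hj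
termination_by L.length
decreasing_by simp_all

lemma mPow_le_klStar (hA : ∀ c : List (Fin n), c ≠ [] → cycleWeight A c ≤ 1) (m : ℕ)
    (i j : Fin n) : mPow A m i j ≤ klStar A i j := by
  obtain ⟨l, hl, hle⟩ := exists_walk_mPow_le A m i j
  exact hle.trans (walkWeight_le_klStar A hA _ rfl hl)

lemma klStar_self (hA : ∀ c : List (Fin n), c ≠ [] → cycleWeight A c ≤ 1) (p : Fin n) :
    klStar A p p = 1 := by
  refine le_antisymm (Finset.sup_le fun m _ => ?_) ?_
  · obtain ⟨l, hl, hle⟩ := exists_walk_mPow_le A m p p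
    exact hle.trans (walkWeight_le_one_of_getLast?_eq A hA p l hl)
  · have h0 : 0 ∈ range n := mem_range.mpr p.pos
    calc 1 = mPow A 0 p p := by simp [mPow]
      _ ≤ klStar A p p := le_sup (f := fun m => mPow A m p p) h0

lemma klStar_mul_le (hA : ∀ c : List (Fin n), c ≠ [] → cycleWeight A c ≤ 1)
    (i p j : Fin n) :
    klStar A i p * klStar A p j ≤ klStar A i j := by
  simp only [klStar, NNReal.finset_sup_mul, NNReal.mul_finset_sup]
  exact Finset.sup_le fun s _ => Finset.sup_le fun r _ =>
    (mPow_mul_le A r s i p j).trans (mPow_le_klStar A hA (r + s) i j)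

end KleeneStar

section Extremal

variable {ι : Type*} [Fintype ι] {S : Matrix ι ι NNReal} {k : ι}

lemma mul_le_of_mem_span (hS : ∀ i t, S i k * S k t ≤ S i t) {v : ι → NNReal}
    (hv : ∃ c : ι → NNReal, ∀ i, v i = univ.sup fun t => c t * S i t) (i : ι) :
    S i k * v k ≤ v i := by
  obtain ⟨c, hc⟩ := hv
  rw [hc k, hc i, NNReal.mul_finset_sup]
  exact Finset.sup_mono_fun fun t _ => by
    calc S i k * (c t * S k t) = c t * (S i k * S k t) := by ring
      _ ≤ c t * S i t := mul_le_mul_right (hS i t) _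

theorem column_eq_or_eq_of_eq_max (hkk : S k k = 1) (hS : ∀ i t, S i k * S k t ≤ S i t)
    {u w : ι → NNReal}
    (hu : ∃ c : ι → NNReal, ∀ i, u i = univ.sup fun t => c t * S i t)
    (hw : ∃ c : ι → NNReal, ∀ i, w i = univ.sup fun t => c t * S i t)
    (h : ∀ i, S i k = max (u i) (w i)) :
    (∀ i, S i k = u i) ∨ (∀ i, S i k = w i) := by
  have column_eq {v : ι → NNReal}
      (hv : ∃ c : ι → NNReal, ∀ i, v i = univ.sup fun t => c t * S i t)
      (hvk : v k = 1) (hle : ∀ i, v i ≤ S i k) (i : ι) : S i k = v i :=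
    le_antisymm (by simpa [hvk] using mul_le_of_mem_span hS hv i) (hle i)
  have hmax : max (u k) (w k) = 1 := (h k).symm.trans hkk
  rcases max_choice (u k) (w k) with huk | hwk
  · exact Or.inl (column_eq hu (huk ▸ hmax) fun i => (h i).ge.trans' (le_max_left _ _))
  · exact Or.inr (column_eq hw (hwk ▸ hmax) fun i => (h i).ge.trans' (le_max_right _ _))

end Extremal

/-- each column of `A*` is a max extremal of the max-algebraic
span of the columns of `A*`. -/
theorem stmt_13 {n : ℕ} (A : Matrix (Fin n) (Fin n) NNReal)
    (hdef : maxCycleMean A = 1) (k : Fin n) (u w : Fin n → NNReal)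
    (hu : ∃ c : Fin n → NNReal, ∀ i, u i = univ.sup fun t => c t * klStar A i t)
    (hw : ∃ c : Fin n → NNReal, ∀ i, w i = univ.sup fun t => c t * klStar A i t)
    (h : ∀ i, klStar A i k = max (u i) (w i)) :
    (∀ i, klStar A i k = u i) ∨ (∀ i, klStar A i k = w i) := by
  have hA := cycleWeight_le_one_of_maxCycleMean_eq_one A hdef
  exact column_eq_or_eq_of_eq_max (klStar_self A hA k) (klStar_mul_le A hA · k) hu hw h
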